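/- Let g be a complex Lie algebra, n a subalgebra, ψ : n → ℂ a character, and V a g-module with V = ⋃_k V^{(k)} for the twisted n-action and V^{(0)} = Wh_ψ V one-dimensional. Then for every nonzero v ∈ V, the submodule U(g)·v contains V^{(0)}; i.e., the intersection U(g)v ∩ Wh_ψ V is nonzero. -/

import Mathlib

/-! A nonzero vector of `V^{(k+1)}` is either a Whittaker vector or is moved by some twisted
operator `x • -` to a nonzero vector of `V^{(k)}` inside the submodule it generates; descending
in this way ends at a nonzero vector of `V^{(0)} = Wh_ψ V`, which spans that line. -/

attribute [local instance 100] LieRing.ofAssociativeRing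

/-- The filtration step `V^{(k)}` for the twisted action of `n ⊆ g` on a `g`-module. -/
def twistFilt (g : Type*) [LieRing g] [LieAlgebra ℂ g] (n : LieSubalgebra ℂ g)
    (ψ : n →ₗ⁅ℂ⁆ ℂ)
    (V : Type*) [AddCommGroup V] [Module ℂ V] [LieRingModule g V] [LieModule ℂ g V]
    (k : ℕ) : Set V :=
  {v : V | ∀ l : List n, l.length = k + 1 →
    l.foldr (fun (x : n) (w : V) => ⁅(x : g), w⁆ - ψ x • w) v = 0}

section TwistFilt

variable {g : Type*} [LieRing g] [LieAlgebra ℂ g] {n : LieSubalgebra ℂ g} {ψ : n →ₗ⁅ℂ⁆ ℂ}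
  {V : Type*} [AddCommGroup V] [Module ℂ V] [LieRingModule g V] [LieModule ℂ g V]

theorem mem_twistFilt_zero_iff {v : V} :
    v ∈ twistFilt g n ψ V 0 ↔ ∀ x : n, ⁅(x : g), v⁆ = ψ x • v := by
  refine ⟨fun hv x => sub_eq_zero.mp (hv [x] rfl), fun hv l hl => ?_⟩
  obtain ⟨x, rfl⟩ := List.length_eq_one_iff.mp hl
  exact sub_eq_zero.mpr (hv x)

theorem twist_mem_twistFilt {k : ℕ} {v : V} (hv : v ∈ twistFilt g n ψ V (k + 1)) (x : n) :
    ⁅(x : g), v⁆ - ψ x • v ∈ twistFilt g n ψ V k := fun l hl => by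
  simpa [List.foldr_append] using hv (l ++ [x]) (by simp [hl])

theorem exists_whittaker_mem_lieSpan_of_mem_twistFilt (k : ℕ) {v : V} (hv : v ≠ 0)
    (hvk : v ∈ twistFilt g n ψ V k) :
    ∃ u : V, u ≠ 0 ∧ (∀ x : n, ⁅(x : g), u⁆ = ψ x • u) ∧ u ∈ LieSubmodule.lieSpan ℂ g {v} := by
  induction k generalizing v with
  | zero => exact ⟨v, hv, mem_twistFilt_zero_iff.mp hvk, LieSubmodule.subset_lieSpan rfl⟩
  | succ k ih =>
    by_cases hwh : ∀ x : n, ⁅(x : g), v⁆ = ψ x • v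
    · exact ⟨v, hv, hwh, LieSubmodule.subset_lieSpan rfl⟩
    obtain ⟨x, hx⟩ := not_forall.mp hwh
    obtain ⟨u, hu, huwh, hu_mem⟩ := ih (sub_ne_zero.mpr hx) (twist_mem_twistFilt hvk x)
    have hv_mem : v ∈ LieSubmodule.lieSpan ℂ g {v} := LieSubmodule.subset_lieSpan rfl
    have hspan_le : LieSubmodule.lieSpan ℂ g {⁅(x : g), v⁆ - ψ x • v} ≤
        LieSubmodule.lieSpan ℂ g {v} :=
      LieSubmodule.lieSpan_le.mpr <| Set.singleton_subset_iff.mpr <|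
        sub_mem (LieSubmodule.lie_mem _ hv_mem) ((LieSubmodule.lieSpan ℂ g {v}).smul_mem _ hv_mem)
    exact ⟨u, hu, huwh, hspan_le hu_mem⟩

end TwistFilt

theorem cyclic_contains_whittaker_line_general
    (g : Type*) [LieRing g] [LieAlgebra ℂ g] (n : LieSubalgebra ℂ g) (ψ : n →ₗ⁅ℂ⁆ ℂ)
    (V : Type*) [AddCommGroup V] [Module ℂ V] [LieRingModule g V] [LieModule ℂ g V]
    (hloc : ∀ v : V, ∃ k : ℕ, v ∈ twistFilt g n ψ V k)
    (w : V)
    (hwh : ∀ u : V, (∀ x : n, ⁅(x : g), u⁆ = ψ x • u) ↔ ∃ c : ℂ, u = c • w) :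
    ∀ v : V, v ≠ 0 →
      (∀ u ∈ twistFilt g n ψ V 0, u ∈ LieSubmodule.lieSpan ℂ g {v}) ∧
      (∃ u : V, u ≠ 0 ∧ (∀ x : n, ⁅(x : g), u⁆ = ψ x • u) ∧
        u ∈ LieSubmodule.lieSpan ℂ g {v}) := by
  intro v hv
  obtain ⟨k, hvk⟩ := hloc v
  obtain ⟨u, hu, huwh, hu_mem⟩ := exists_whittaker_mem_lieSpan_of_mem_twistFilt k hv hvk
  obtain ⟨c, rfl⟩ := (hwh u).mp huwh
  have hw_mem : w ∈ LieSubmodule.lieSpan ℂ g {v} :=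
    (Submodule.smul_mem_iff _ (left_ne_zero_of_smul hu)).mp hu_mem
  refine ⟨fun u' hu' => ?_, ⟨c • w, hu, huwh, hu_mem⟩⟩
  obtain ⟨c', rfl⟩ := (hwh u').mp (mem_twistFilt_zero_iff.mp hu')
  exact (LieSubmodule.lieSpan ℂ g {v}).smul_mem c' hw_mem

/-- if `V` is locally ψ-nilpotent and `Wh_ψ V = V^{(0)}` is one-dimensional,
then the submodule generated by any nonzero `v` contains `V^{(0)}`; in particular
`U(g)v ∩ Wh_ψ V ≠ 0`. -/
theorem cyclic_contains_whittaker_line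
    (g : Type*) [LieRing g] [LieAlgebra ℂ g] (n : LieSubalgebra ℂ g) (ψ : n →ₗ⁅ℂ⁆ ℂ)
    (V : Type*) [AddCommGroup V] [Module ℂ V] [LieRingModule g V] [LieModule ℂ g V]
    (hloc : ∀ v : V, ∃ k : ℕ, v ∈ twistFilt g n ψ V k)
    (w : V) (hw : w ≠ 0)
    (hwh : ∀ u : V, (∀ x : n, ⁅(x : g), u⁆ = ψ x • u) ↔ ∃ c : ℂ, u = c • w) :
    ∀ v : V, v ≠ 0 →
      (∀ u ∈ twistFilt g n ψ V 0, u ∈ LieSubmodule.lieSpan ℂ g {v}) ∧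
      (∃ u : V, u ≠ 0 ∧ (∀ x : n, ⁅(x : g), u⁆ = ψ x • u) ∧
        u ∈ LieSubmodule.lieSpan ℂ g {v}) :=
  cyclic_contains_whittaker_line_general g n ψ V hloc w hwh
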